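/- For integers d ≥ 2, k ≥ 3, and positive reals α_1,...,α_d with ∑α_i = 1, setting b_k = (1/2)·(d-1)^{k-1}·∏_{j=1}^{k-1}(d^j-1)^{-1}, one has b_k ≤ b_{k-1} · (∑_{i≠j} α_i·α_j^{k-1}) / (1 − ∑_{i=1}^d α_i^k). -/

import Mathlib

/-! Write `S m = ∑ i, α i ^ m`. The off-diagonal sum is `S (k-1) - S k` and
`b_k / b_{k-1} = (d-1) / (d^(k-1) - 1)`, so the claim is
`(d-1) (1 - S k) ≤ (d^(k-1) - 1) (S (k-1) - S k)`. On pairs with `x + y ≤ 1` the map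
`x ↦ x^m - x^(m+1)` is monotone, so Chebyshev's sum inequality gives
`S m - S (m+1) ≤ d (S (m+1) - S (m+2))`; telescoping `1 - S k = ∑_{1 ≤ m < k} (S m - S (m+1))`
against these ratios yields the geometric factor `(d^(k-1) - 1) / (d - 1)`. -/

open Finset

theorem pow_sub_pow_succ_le_of_add_le_one {R : Type*} [CommRing R] [LinearOrder R]
    [IsStrictOrderedRing R] {x y : R} (hx : 0 ≤ x) (hxy : x ≤ y) (hsum : x + y ≤ 1) (n : ℕ) :
    x ^ (n + 1) - x ^ (n + 2) ≤ y ^ (n + 1) - y ^ (n + 2) := by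
  have hpow : x ^ n ≤ y ^ n := pow_le_pow_left₀ hx hxy n
  have hgap : x ^ n * (y - x) ≤ y ^ (n + 1) - x ^ (n + 1) := by
    rw [pow_succ, pow_succ]
    linear_combination mul_le_mul_of_nonneg_right hpow (hx.trans hxy)
  have hgap_nonneg : 0 ≤ y ^ (n + 1) - x ^ (n + 1) :=
    sub_nonneg.mpr (pow_le_pow_left₀ hx hxy _)
  have key : x ^ (n + 1) * (y - x) ≤ (1 - y) * (y ^ (n + 1) - x ^ (n + 1)) :=
    calc x ^ (n + 1) * (y - x) = x * (x ^ n * (y - x)) := by ring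
      _ ≤ x * (y ^ (n + 1) - x ^ (n + 1)) := mul_le_mul_of_nonneg_left hgap hx
      _ ≤ (1 - y) * (y ^ (n + 1) - x ^ (n + 1)) :=
        mul_le_mul_of_nonneg_right (by linarith) hgap_nonneg
  -- `y^(n+2) - x^(n+2) = y (y^(n+1) - x^(n+1)) + x^(n+1) (y - x)`
  linear_combination key

theorem sum_filter_ne_mul {ι R : Type*} [Fintype ι] [DecidableEq ι] [CommRing R] (f g : ι → R) :
    ∑ p ∈ univ.filter (fun p : ι × ι => p.1 ≠ p.2), f p.1 * g p.2
      = (∑ i, f i) * ∑ i, g i - ∑ i, f i * g i := by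
  have hdiag : ∑ p ∈ univ.filter (fun p : ι × ι => ¬ p.1 ≠ p.2), f p.1 * g p.2
      = ∑ i, f i * g i := by
    simp [sum_filter, Fintype.sum_prod_type]
  rw [eq_sub_iff_add_eq, ← hdiag, sum_filter_add_sum_filter_not, sum_mul_sum,
    Fintype.sum_prod_type]

theorem sub_mul_sub_le_pow_sub_mul_sub {R : Type*} [CommRing R] [LinearOrder R]
    [IsStrictOrderedRing R] {s : ℕ → R} {c : R} (hc : 1 ≤ c)
    (hs : ∀ m, s m - s (m + 1) ≤ c * (s (m + 1) - s (m + 2))) (n : ℕ) :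
    (c - 1) * (s 0 - s (n + 1)) ≤ (c ^ (n + 1) - 1) * (s n - s (n + 1)) := by
  induction n with
  | zero => simp
  | succ n ih =>
    have hcn : 0 ≤ c ^ (n + 1) - 1 := sub_nonneg.mpr (one_le_pow₀ hc)
    calc (c - 1) * (s 0 - s (n + 2))
        = (c - 1) * (s 0 - s (n + 1)) + (c - 1) * (s (n + 1) - s (n + 2)) := by ring
      _ ≤ (c ^ (n + 1) - 1) * (c * (s (n + 1) - s (n + 2)))
          + (c - 1) * (s (n + 1) - s (n + 2)) :=
        add_le_add_left (ih.trans (mul_le_mul_of_nonneg_left (hs n) hcn)) _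
      _ = (c ^ (n + 2) - 1) * (s (n + 1) - s (n + 2)) := by ring

theorem sum_pow_sub_sum_pow_succ_le_card_mul {ι R : Type*} [Fintype ι] [CommRing R]
    [LinearOrder R] [IsStrictOrderedRing R] {α : ι → R}
    (hα : ∀ i, 0 ≤ α i) (hsum : ∑ i, α i = 1) (n : ℕ) :
    ∑ i, α i ^ (n + 1) - ∑ i, α i ^ (n + 2)
      ≤ Fintype.card ι * (∑ i, α i ^ (n + 2) - ∑ i, α i ^ (n + 3)) := by
  have hmono : Monovary (fun i => α i ^ (n + 1) - α i ^ (n + 2)) α := by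
    intro i j hij
    have hpair : α i + α j ≤ 1 :=
      hsum ▸ add_le_sum (fun l _ => hα l) (mem_univ i) (mem_univ j) fun h => hij.ne (h ▸ rfl)
    exact pow_sub_pow_succ_le_of_add_le_one (hα i) hij.le hpair n
  calc ∑ i, α i ^ (n + 1) - ∑ i, α i ^ (n + 2)
      = (∑ i, (α i ^ (n + 1) - α i ^ (n + 2))) * ∑ i, α i := by
        rw [hsum, mul_one, sum_sub_distrib]
    _ ≤ Fintype.card ι * ∑ i, (α i ^ (n + 1) - α i ^ (n + 2)) * α i :=
        hmono.sum_mul_sum_le_card_mul_sum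
    _ = Fintype.card ι * (∑ i, α i ^ (n + 2) - ∑ i, α i ^ (n + 3)) := by
        rw [← sum_sub_distrib]
        congr 1
        exact sum_congr rfl fun i _ => by ring

theorem sum_pow_lt_one {ι R : Type*} [Fintype ι] [Nontrivial ι] [CommRing R] [LinearOrder R]
    [IsStrictOrderedRing R] {α : ι → R}
    (hα : ∀ i, 0 < α i) (hsum : ∑ i, α i = 1) {k : ℕ} (hk : 2 ≤ k) :
    ∑ i, α i ^ k < 1 := by
  have hlt : ∀ i, α i < 1 := fun i => by
    obtain ⟨j, hji⟩ := exists_ne i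
    linarith [hα j, hsum ▸ add_le_sum (fun l _ => (hα l).le) (mem_univ i) (mem_univ j) hji.symm]
  calc ∑ i, α i ^ k < ∑ i, α i :=
        sum_lt_sum_of_nonempty univ_nonempty fun i _ =>
          pow_lt_self_of_lt_one₀ (hα i) (hlt i) (by omega)
    _ = 1 := hsum

theorem b_ratio_ineq (d k : ℕ) (hd : 2 ≤ d) (hk : 3 ≤ k)
    (α : Fin d → ℝ) (hα : ∀ i, 0 < α i) (hsum : ∑ i, α i = 1) :
    (1 / 2 : ℝ) * ((d : ℝ) - 1) ^ (k - 1) * ∏ j ∈ Finset.Icc 1 (k - 1), ((d : ℝ) ^ j - 1)⁻¹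
      ≤ ((1 / 2 : ℝ) * ((d : ℝ) - 1) ^ (k - 2) *
          ∏ j ∈ Finset.Icc 1 (k - 2), ((d : ℝ) ^ j - 1)⁻¹) *
        ((∑ p ∈ Finset.univ.filter (fun p : Fin d × Fin d => p.1 ≠ p.2),
            α p.1 * α p.2 ^ (k - 1)) / (1 - ∑ i, α i ^ k)) := by
  obtain ⟨m, rfl⟩ : ∃ m, k = m + 2 := ⟨k - 2, by omega⟩
  have : Nontrivial (Fin d) := Fin.nontrivial_iff_two_le.mpr hd
  have hd1 : (1 : ℝ) ≤ d := by exact_mod_cast (by omega : 1 ≤ d)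
  have hpow_pos : ∀ j ≥ 1, (0 : ℝ) < (d : ℝ) ^ j - 1 := fun j hj =>
    sub_pos.mpr (one_lt_pow₀ (by exact_mod_cast (by omega : 1 < d)) (by omega))
  have hgap : 0 < 1 - ∑ i, α i ^ (m + 2) := sub_pos.mpr (sum_pow_lt_one hα hsum (by omega))
  have hrec : ((d : ℝ) - 1) * (1 - ∑ i, α i ^ (m + 2))
      ≤ ((d : ℝ) ^ (m + 1) - 1) * (∑ i, α i ^ (m + 1) - ∑ i, α i ^ (m + 2)) := by
    have := sub_mul_sub_le_pow_sub_mul_sub (s := fun j => ∑ i, α i ^ (j + 1)) hd1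
      (fun j => by simpa using sum_pow_sub_sum_pow_succ_le_card_mul (fun i => (hα i).le) hsum j) m
    simpa [hsum] using this
  have hoff := sum_filter_ne_mul α (α · ^ (m + 1))
  simp only [hsum, one_mul, ← pow_succ'] at hoff
  have hb : 0 ≤ (1 / 2 : ℝ) * ((d : ℝ) - 1) ^ m * ∏ j ∈ Icc 1 m, ((d : ℝ) ^ j - 1)⁻¹ :=
    mul_nonneg (mul_nonneg (by norm_num) (pow_nonneg (sub_nonneg.mpr hd1) m))
      (prod_nonneg fun j hj => (inv_pos.mpr (hpow_pos j (mem_Icc.mp hj).1)).le)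
  rw [show m + 2 - 1 = m + 1 by omega, show m + 2 - 2 = m by omega, hoff,
    prod_Icc_succ_top (by omega : 1 ≤ m + 1)]
  calc _ = ((1 / 2 : ℝ) * ((d : ℝ) - 1) ^ m * ∏ j ∈ Icc 1 m, ((d : ℝ) ^ j - 1)⁻¹)
        * (((d : ℝ) - 1) / ((d : ℝ) ^ (m + 1) - 1)) := by ring
    _ ≤ _ := by
      refine mul_le_mul_of_nonneg_left ?_ hb
      rw [div_le_div_iff₀ (hpow_pos _ (by omega)) hgap]
      linarith
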